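/- (Reification and reflection for the syntactic forcing structure of the lambda calculus.) Instantiate the forcing structure by: K = List Formula (contexts), le = the prefix/extension relation generated by reflexivity and le w₁ w₂ → le w₁ (F::w₂), pforces w p = ND w (prop p), Answer = Formula, X w F = ND w F. Then for every formula F and context w there are functions sreify : Cont sforces w F → ND w F and sreflect : ND w F → Cont sforces w F. -/

import Mathlib

namespace ExpLog

-- Formulas (types) generated by atoms, sums, products and arrows.
inductive Formula : Type
  | prop : ℕ → Formula
  | disj : Formula → Formula → Formula
  | conj : Formula → Formula → Formula
  | impl : Formula → Formula → Formula
  deriving Repr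
-- Intrinsically typed lambda terms (natural deduction proofs) with de Bruijn indices.
inductive ND : List Formula → Formula → Type
  | hyp  {Γ A} : ND (A :: Γ) A
  | wkn  {Γ A B} : ND Γ A → ND (B :: Γ) A
  | lam  {Γ A B} : ND (A :: Γ) B → ND Γ (.impl A B)
  | app  {Γ A B} : ND Γ (.impl A B) → ND Γ A → ND Γ B
  | pair {Γ A B} : ND Γ A → ND Γ B → ND Γ (.conj A B)
  | fst  {Γ A B} : ND Γ (.conj A B) → ND Γ A
  | snd  {Γ A B} : ND Γ (.conj A B) → ND Γ B
  | inl  {Γ A B} : ND Γ A → ND Γ (.disj A B)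
  | inr  {Γ A B} : ND Γ B → ND Γ (.disj A B)
  | cas  {Γ A B C} : ND Γ (.disj A B) → ND (A :: Γ) C → ND (B :: Γ) C → ND Γ C
/-- A forcing structure: a type of worlds, a preorder-like relation on worlds,
an interpretation of atomic types, and a family of answer types. -/
structure ForcingStructure where
  K : Type
  le : K → K → Type
  pforces : K → ℕ → Type
  Answer : Type
  X : K → Answer → Type

/-- The continuation monad over a forcing structure
(`Cont FS f w` is the paper's `Cont f w x` with `f := fun w => f w x`). -/
def Cont (FS : ForcingStructure) (f : FS.K → Type) (w : FS.K) : Type :=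
  ∀ (a : FS.Answer) (w' : FS.K), FS.le w w' →
    (∀ w'', FS.le w' w'' → f w'' → FS.X w'' a) → FS.X w' a

/-- The forcing fixpoint on arbitrary formulas. -/
def sforces (FS : ForcingStructure) : Formula → FS.K → Type
  | .prop p => fun w => FS.pforces w p
  | .disj F G => fun w => Sum (Cont FS (sforces FS F) w) (Cont FS (sforces FS G) w)
  | .conj F G => fun w => (Cont FS (sforces FS F) w) × (Cont FS (sforces FS G) w)
  | .impl F G => fun w => ∀ w', FS.le w w' →
      Cont FS (sforces FS F) w' → Cont FS (sforces FS G) w'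

/-- Forcing of a context: iterated product of `Cont sforces` over its formulas. -/
def lforces (FS : ForcingStructure) : List Formula → FS.K → Type
  | [] => fun _ => PUnit
  | A :: Γ => fun w => (Cont FS (sforces FS A) w) × (lforces FS Γ w)

-- The prefix/extension relation on contexts.
inductive LeCtx : List Formula → List Formula → Type
  | refl {w} : LeCtx w w
  | cons {w1 w2 F} : LeCtx w1 w2 → LeCtx w1 (F :: w2)

/-- The syntactic forcing structure of the lambda calculus with sums:
worlds are contexts, `le` is context extension, atomic types are interpreted by
terms of atomic type, and the answer type at world `w` and formula `F` is
the set of terms `ND w F`. -/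
def structureND : ForcingStructure where
  K := List Formula
  le := LeCtx
  pforces := fun w p => ND w (.prop p)
  Answer := Formula
  X := fun w F => ND w F

/-! Reification and reflection are the two halves of normalisation by evaluation, defined by
simultaneous recursion on the formula. Reflecting a term of sum type is where the answer type
`X w F = ND w F` matters: the continuation is run in both branches of a `cas`, which is possible
only because answers are themselves terms, of an arbitrary type. -/

def ND.weaken : {w w' : List Formula} → LeCtx w w' → {F : Formula} → ND w F → ND w' F
  | _, _, .refl, _, t => t
  | _, _, .cons h, _, t => .wkn (ND.weaken h t)

def LeCtx.trans : {a b c : List Formula} → LeCtx a b → LeCtx b c → LeCtx a c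
  | _, _, _, h, .refl => h
  | _, _, _, h, .cons h' => .cons (LeCtx.trans h h')

mutual

def reifyForces : (F : Formula) → (w : List Formula) → sforces structureND F w → ND w F
  | .prop _, _, s => s
  | .disj F _, w, .inl c => .inl (c F w .refl fun w' _ => reifyForces F w')
  | .disj _ G, w, .inr c => .inr (c G w .refl fun w' _ => reifyForces G w')
  | .conj F G, w, (cF, cG) =>
    .pair (cF F w .refl fun w' _ => reifyForces F w') (cG G w .refl fun w' _ => reifyForces G w')
  | .impl F G, w, s =>
    .lam (s (F :: w) (.cons .refl) (sreflect F (F :: w) .hyp) G (F :: w) .refl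
      fun w' _ => reifyForces G w')

def sreflect : (F : Formula) → (w : List Formula) → ND w F →
    Cont structureND (sforces structureND F) w
  | .prop _, _, t => fun _ w' h k => k w' .refl (t.weaken h)
  | .disj F G, _, t => fun _ w' h k =>
    .cas (t.weaken h)
      (k (F :: w') (.cons .refl) (.inl (sreflect F (F :: w') .hyp)))
      (k (G :: w') (.cons .refl) (.inr (sreflect G (G :: w') .hyp)))
  | .conj F G, _, t => fun _ w' h k =>
    k w' .refl (sreflect F w' (.fst (t.weaken h)), sreflect G w' (.snd (t.weaken h)))
  | .impl F G, _, t => fun _ w' h k =>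
    k w' .refl fun w'' h' cF =>
      sreflect G w'' (.app (t.weaken (h.trans h')) (cF F w'' .refl fun v _ => reifyForces F v))

end

def sreify (F : Formula) (w : List Formula) (c : Cont structureND (sforces structureND F) w) :
    ND w F :=
  c F w .refl fun w' _ => reifyForces F w'

/-- Reification and reflection for the syntactic forcing
structure: for every formula `F` and context `w` there are functions
`sreify : Cont sforces w F → ND w F` and `sreflect : ND w F → Cont sforces w F`. -/
theorem sreify_sreflect_exist :
    Nonempty
      ((∀ (F : Formula) (w : List Formula),
          Cont structureND (sforces structureND F) w → ND w F) ×
       (∀ (F : Formula) (w : List Formula),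
          ND w F → Cont structureND (sforces structureND F) w)) :=
  ⟨(sreify, sreflect)⟩

end ExpLog
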